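/- arXiv:1511.03417 — 6 statements merged into one kernel-verified Lean document; each statement's English description precedes it below -/
import Mathlib

section
/- (Lemma 1, deterministic reconfiguration frequency bound) Fix T' > 0, a constant G ≥ 0, and a strictly increasing sublinear function g. Suppose the scheduling policy π satisfies ⟨L(t), Π(t)⟩ ≥ W*(t) − G for all t. Set M = g^{-1}(G + N(A_max+1)T') + N·T'. If the g-adaptive policy reconfigures at time t and W*(t) > M, then for every τ ∈ [t+1, t+T'], the weight gap satisfies W*(τ) − ⟨L(τ), Π(t)⟩ ≤ g(W*(τ)); hence no reconfiguration occurs during [t+1, t+T']. -/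
noncomputable def schedWeight {N : ℕ} (L : Matrix (Fin N) (Fin N) ℝ)
    (σ : Equiv.Perm (Fin N)) : ℝ := ∑ i, L i (σ i)

noncomputable def maxWeight {N : ℕ} (L : Matrix (Fin N) (Fin N) ℝ) : ℝ :=
  Finset.univ.sup' Finset.univ_nonempty (fun σ : Equiv.Perm (Fin N) => schedWeight L σ)

/-- Lemma 1 (deterministic reconfiguration frequency bound). Fix `T' > 0`, `G ≥ 0`,
and a nonnegative, continuous, strictly increasing, sublinear hysteresis function `g`.
Suppose the policy `π` satisfies `⟨L(t), Π(t)⟩ ≥ W*(t) − G` for all `t`, and set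
`M = g⁻¹(G + N(A_max+1)T') + N·T'`. If `W*(t) > M` (and the schedule is reconfigured
to `Π(t)` at time `t`), then for every `τ ∈ [t+1, t+T']` the weight gap satisfies
`W*(τ) − ⟨L(τ), Π(t)⟩ ≤ g(W*(τ))`, so no reconfiguration occurs in `[t+1, t+T']`. -/
theorem stmt5 (N : ℕ) (A_max : ℝ) (hAmax : 0 ≤ A_max)
    (L A D : ℕ → Matrix (Fin N) (Fin N) ℝ)
    (hevol : ∀ t, L (t + 1) = L t - D t + A t)
    (hA : ∀ t i j, 0 ≤ A t i j ∧ A t i j ≤ A_max)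
    (hD : ∀ t i j, D t i j = 0 ∨ D t i j = 1)
    (g : ℝ → ℝ) (hg_nonneg : ∀ x, 0 ≤ g x) (hg_cont : Continuous g)
    (hg_mono : StrictMono g)
    (hg_sub : Filter.Tendsto (fun x => g x / x) Filter.atTop (nhds 0))
    (T' : ℕ) (hT' : 0 < T') (G : ℝ) (hG : 0 ≤ G)
    (Pol : ℕ → Equiv.Perm (Fin N))
    (hPol : ∀ t, maxWeight (L t) - G ≤ schedWeight (L t) (Pol t))
    (M : ℝ) (hM : g (M - (N : ℝ) * T') = G + (N : ℝ) * (A_max + 1) * T')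
    (t : ℕ) (hW : M < maxWeight (L t)) :
    ∀ τ : ℕ, t + 1 ≤ τ → τ ≤ t + T' →
      maxWeight (L τ) - schedWeight (L τ) (Pol t) ≤ g (maxWeight (L τ)) := by
  -- per-entry bounds after k steps
  have hentry : ∀ k i j, L t i j - k ≤ L (t + k) i j ∧ L (t + k) i j ≤ L t i j + k * A_max := by
    intro k
    induction k with
    | zero => intro i j; simp
    | succ k ih =>
      intro i j
      have h1 := (ih i j).1
      have h2 := (ih i j).2
      have hAe := hA (t + k) i j
      have hDe : 0 ≤ D (t + k) i j ∧ D (t + k) i j ≤ 1 := by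
        rcases hD (t + k) i j with h | h <;> simp [h]
      have heq : L (t + (k + 1)) i j = L (t + k) i j - D (t + k) i j + A (t + k) i j := by
        have := hevol (t + k)
        have : L (t + k + 1) = L (t + k) - D (t + k) + A (t + k) := this
        rw [show t + (k + 1) = t + k + 1 by ring, this]
        simp [Matrix.sub_apply, Matrix.add_apply]
      constructor
      · push_cast
        rw [heq]
        push_cast at h1
        linarith [hAe.1, hDe.2]
      · push_cast
        rw [heq]
        push_cast at h2
        linarith [hAe.2, hDe.1]
  -- schedWeight bounds
  have hsched : ∀ k (σ : Equiv.Perm (Fin N)),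
      schedWeight (L t) σ - N * k ≤ schedWeight (L (t + k)) σ ∧
      schedWeight (L (t + k)) σ ≤ schedWeight (L t) σ + N * (k * A_max) := by
    intro k σ
    constructor
    · have : ∑ i, (L t i (σ i) - (k : ℝ)) ≤ ∑ i, L (t + k) i (σ i) :=
        Finset.sum_le_sum fun i _ => (hentry k i (σ i)).1
      simpa [schedWeight, Finset.sum_sub_distrib, mul_comm] using this
    · have : ∑ i, L (t + k) i (σ i) ≤ ∑ i, (L t i (σ i) + (k : ℝ) * A_max) :=
        Finset.sum_le_sum fun i _ => (hentry k i (σ i)).2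
      simpa [schedWeight, Finset.sum_add_distrib, mul_comm] using this
  -- maxWeight bounds
  have hmaxub : ∀ k, maxWeight (L (t + k)) ≤ maxWeight (L t) + N * (k * A_max) := by
    intro k
    apply Finset.sup'_le
    intro σ _
    calc schedWeight (L (t + k)) σ ≤ schedWeight (L t) σ + N * (k * A_max) := (hsched k σ).2
      _ ≤ maxWeight (L t) + N * (k * A_max) := by
          have : schedWeight (L t) σ ≤ maxWeight (L t) :=
            Finset.le_sup' _ (Finset.mem_univ σ)
          linarith
  have hmaxlb : ∀ k, maxWeight (L t) - N * k ≤ maxWeight (L (t + k)) := by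
    intro k
    have : maxWeight (L t) ≤ maxWeight (L (t + k)) + N * k := by
      apply Finset.sup'_le
      intro σ _
      have h1 := (hsched k σ).1
      have h2 : schedWeight (L (t + k)) σ ≤ maxWeight (L (t + k)) :=
        Finset.le_sup' _ (Finset.mem_univ σ)
      linarith
    linarith
  intro τ hτ1 hτ2
  obtain ⟨k, rfl⟩ : ∃ k, τ = t + k := ⟨τ - t, by omega⟩
  have hk : k ≤ T' := by omega
  have hkT : (k : ℝ) ≤ T' := by exact_mod_cast hk
  have hNk : (N : ℝ) * k ≤ (N : ℝ) * T' := by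
    apply mul_le_mul_of_nonneg_left hkT (by positivity)
  have hNkA : (N : ℝ) * (k * A_max) ≤ (N : ℝ) * T' * A_max := by
    have : (N : ℝ) * (k * A_max) = (N : ℝ) * k * A_max := by ring
    rw [this]
    exact mul_le_mul_of_nonneg_right hNk hAmax
  -- gap bound
  have hgap : maxWeight (L (t + k)) - schedWeight (L (t + k)) (Pol t)
      ≤ G + (N : ℝ) * (A_max + 1) * T' := by
    have h1 := hmaxub k
    have h2 := (hsched k (Pol t)).1
    have h3 := hPol t
    nlinarith
  -- g lower bound
  have hWlb : M - (N : ℝ) * T' ≤ maxWeight (L (t + k)) := by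
    have := hmaxlb k
    linarith
  calc maxWeight (L (t + k)) - schedWeight (L (t + k)) (Pol t)
      ≤ G + (N : ℝ) * (A_max + 1) * T' := hgap
    _ = g (M - (N : ℝ) * T') := hM.symm
    _ ≤ g (maxWeight (L (t + k))) := hg_mono.monotone hWlb
end

section
/- Under a g-adaptive policy constructed from a policy π satisfying ⟨L(t), Π(t)⟩ ≥ W*(t) − G, the weight of the currently held schedule S(t) satisfies W*(t) − ⟨L(t), S(t)⟩ ≤ G + g(W*(t)) at every time t. -/
/-- Under a `g`-adaptive policy built from a policy `π` satisfying
`⟨L(t), Π(t)⟩ ≥ W*(t) − G`, the held schedule `S(t)` satisfies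
`W*(t) − ⟨L(t), S(t)⟩ ≤ G + g(W*(t))` at every time `t`. -/
theorem stmt6 (N : ℕ) (L : ℕ → Matrix (Fin N) (Fin N) ℝ)
    (g : ℝ → ℝ) (hg_nonneg : ∀ x, 0 ≤ g x) (hg_mono : StrictMono g)
    (hg_sub : Filter.Tendsto (fun x => g x / x) Filter.atTop (nhds 0))
    (G : ℝ) (hG : 0 ≤ G)
    (Pol S : ℕ → Equiv.Perm (Fin N))
    (hPol : ∀ t, maxWeight (L t) - G ≤ schedWeight (L t) (Pol t))
    (hS0 : S 0 = Pol 0)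
    (hrule : ∀ t,
      (schedWeight (L (t + 1)) (Pol (t + 1)) - schedWeight (L (t + 1)) (S t)
          ≤ g (schedWeight (L (t + 1)) (Pol (t + 1))) ∧ S (t + 1) = S t) ∨
      (g (schedWeight (L (t + 1)) (Pol (t + 1)))
          < schedWeight (L (t + 1)) (Pol (t + 1)) - schedWeight (L (t + 1)) (S t) ∧
        S (t + 1) = Pol (t + 1))) :
    ∀ t, maxWeight (L t) - schedWeight (L t) (S t) ≤ G + g (maxWeight (L t)) := by
  have hle : ∀ t, schedWeight (L t) (Pol t) ≤ maxWeight (L t) := fun t =>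
    Finset.le_sup' _ (Finset.mem_univ _)
  intro t
  match t with
  | 0 =>
    rw [hS0]
    have := hPol 0
    have := hg_nonneg (maxWeight (L 0))
    linarith
  | t + 1 =>
    rcases hrule t with ⟨h1, h2⟩ | ⟨h1, h2⟩
    · rw [h2]
      have h3 := hPol (t + 1)
      have h4 := hg_mono.monotone (hle (t + 1))
      linarith
    · rw [h2]
      have := hPol (t + 1)
      have := hg_nonneg (maxWeight (L (t + 1)))
      linarith
end

section
/- (Pipelined MaxWeight approximation, Corollary 1 ingredient) If Π(t) is the MaxWeight schedule for the delayed queue state L(t−K), i.e. ⟨L(t−K), Π(t)⟩ = max_S ⟨L(t−K), S⟩, and arrivals are bounded by A_max and departures by 1 per queue per slot, then ⟨L(t), Π(t)⟩ ≥ W*(t) − N(A_max+1)K, where W*(t) = max_S ⟨L(t), S⟩. -/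
/-- Pipelined MaxWeight approximation: if `Π(t)` is the MaxWeight schedule for the
delayed state `L(t−K)` (here `t = s + K`), and arrivals are bounded by `A_max` and
departures by 1 per queue per slot, then
`⟨L(t), Π(t)⟩ ≥ W*(t) − N(A_max+1)K`. -/
theorem stmt7 (N : ℕ) (A_max : ℝ) (hAmax : 0 ≤ A_max)
    (L A D : ℕ → Matrix (Fin N) (Fin N) ℝ)
    (hevol : ∀ t, L (t + 1) = L t - D t + A t)
    (hA : ∀ t i j, 0 ≤ A t i j ∧ A t i j ≤ A_max)
    (hD : ∀ t i j, D t i j = 0 ∨ D t i j = 1)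
    (K s : ℕ) (π : Equiv.Perm (Fin N))
    (hπ : schedWeight (L s) π = maxWeight (L s)) :
    maxWeight (L (s + K)) - (N : ℝ) * (A_max + 1) * K ≤ schedWeight (L (s + K)) π := by
  -- entrywise bounds
  have hub : ∀ i j, L (s + K) i j ≤ L s i j + A_max * K := by
    intro i j
    induction K with
    | zero => simp
    | succ k ih =>
      have h := hevol (s + k)
      have : L (s + (k + 1)) i j = L (s + k) i j - D (s + k) i j + A (s + k) i j := by
        rw [show s + (k + 1) = (s + k) + 1 from rfl, h]
        simp [Matrix.sub_apply, Matrix.add_apply]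
      rw [this]
      have hD0 : 0 ≤ D (s + k) i j := by rcases hD (s + k) i j with h | h <;> simp [h]
      have hA1 := (hA (s + k) i j).2
      push_cast
      nlinarith
  have hlb : ∀ i j, L s i j - K ≤ L (s + K) i j := by
    clear hub
    intro i j
    induction K with
    | zero => simp
    | succ k ih =>
      have h := hevol (s + k)
      have : L (s + (k + 1)) i j = L (s + k) i j - D (s + k) i j + A (s + k) i j := by
        rw [show s + (k + 1) = (s + k) + 1 from rfl, h]
        simp [Matrix.sub_apply, Matrix.add_apply]
      rw [this]
      have hD1 : D (s + k) i j ≤ 1 := by rcases hD (s + k) i j with h | h <;> simp [h]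
      have hA0 := (hA (s + k) i j).1
      push_cast
      nlinarith
  -- sum bounds
  have hsum1 : ∀ σ : Equiv.Perm (Fin N),
      schedWeight (L (s + K)) σ ≤ schedWeight (L s) σ + (N : ℝ) * A_max * K := by
    intro σ
    have : schedWeight (L (s + K)) σ ≤ ∑ i : Fin N, (L s i (σ i) + A_max * K) :=
      Finset.sum_le_sum fun i _ => hub i (σ i)
    simpa [schedWeight, Finset.sum_add_distrib, mul_assoc] using this
  have hsum2 : schedWeight (L s) π ≤ schedWeight (L (s + K)) π + (N : ℝ) * K := by
    have : ∑ i : Fin N, (L s i (π i) - (K : ℝ)) ≤ schedWeight (L (s + K)) π :=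
      Finset.sum_le_sum fun i _ => hlb i (π i)
    simp only [Finset.sum_sub_distrib, Finset.sum_const, Finset.card_univ,
      Fintype.card_fin, nsmul_eq_mul] at this
    have := this
    unfold schedWeight at *
    linarith
  have hmax : maxWeight (L (s + K)) ≤ schedWeight (L s) π + (N : ℝ) * A_max * K := by
    apply Finset.sup'_le
    intro σ _
    have h1 := hsum1 σ
    have h2 : schedWeight (L s) σ ≤ maxWeight (L s) :=
      Finset.le_sup' (f := fun σ : Equiv.Perm (Fin N) => schedWeight (L s) σ)
        (Finset.mem_univ σ)
    linarith [hπ ▸ h2]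
  nlinarith [hmax, hsum2]
end

section
/- If a sequence L(t) of nonnegative reals satisfies the drift condition E[V(L(t+1)) − V(L(t)) | L(t)] ≤ −ε·‖L(t)‖ + K for all L(t) with ‖L(t)‖ > B, and the drift is bounded by C < ∞ when ‖L(t)‖ ≤ B, then limsup_{t→∞} (1/t)·Σ_{τ<t} E[‖L(τ)‖] ≤ (K + C + εB)/ε, i.e. the system is strongly stable. -/
open MeasureTheory Filter Finset

/-! Integrating the drift condition gives `E V(t+1) − E V(t) ≤ −ε E‖L(t)‖ + (K + C + εB)` at every
step, because `C ≤ −ε x + K + C + εB` whenever `x ≤ B`. Telescoping and `V ≥ 0` bound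
`ε Σ_{τ<t} E‖L(τ)‖` by `E V(0) + t (K + C + εB)`; dividing by `εt`, the initial term vanishes in
the limit. -/

theorem mul_sum_range_le_of_drift {v ℓ : ℕ → ℝ} {ε c : ℝ} (hv : ∀ t, 0 ≤ v t)
    (hdrift : ∀ t, v (t + 1) - v t ≤ -ε * ℓ t + c) (t : ℕ) :
    ε * ∑ τ ∈ range t, ℓ τ ≤ v 0 + t * c := by
  have hsum := sum_le_sum fun τ (_ : τ ∈ range t) => hdrift τ
  rw [sum_range_sub v, sum_add_distrib, ← mul_sum, sum_const, card_range, nsmul_eq_mul] at hsum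
  linarith [hv t]

theorem limsup_average_le_of_drift {v ℓ : ℕ → ℝ} {ε c : ℝ} (hε : 0 < ε) (hℓ : ∀ t, 0 ≤ ℓ t)
    (hv : ∀ t, 0 ≤ v t) (hdrift : ∀ t, v (t + 1) - v t ≤ -ε * ℓ t + c) :
    limsup (fun t : ℕ => (1 / (t : ℝ)) * ∑ τ ∈ range t, ℓ τ) atTop ≤ c / ε := by
  have hbound : ∀ᶠ t : ℕ in atTop,
      (1 / (t : ℝ)) * ∑ τ ∈ range t, ℓ τ ≤ v 0 / ε * (1 / t) + c / ε := by
    filter_upwards [eventually_ge_atTop 1] with t ht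
    have ht0 : (0 : ℝ) < t := by exact_mod_cast ht
    calc (1 / (t : ℝ)) * ∑ τ ∈ range t, ℓ τ
        ≤ (1 / (t : ℝ)) * ((v 0 + t * c) / ε) := by
          gcongr
          rw [le_div_iff₀ hε, mul_comm]
          exact mul_sum_range_le_of_drift hv hdrift t
      _ = v 0 / ε * (1 / t) + c / ε := by field_simp
  have hlim : Tendsto (fun t : ℕ => v 0 / ε * (1 / (t : ℝ)) + c / ε) atTop (nhds (c / ε)) := by
    simpa using (tendsto_one_div_atTop_nhds_zero_nat.const_mul (v 0 / ε)).add_const (c / ε)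
  have hcobdd : IsCoboundedUnder (· ≤ ·) atTop
      (fun t : ℕ => (1 / (t : ℝ)) * ∑ τ ∈ range t, ℓ τ) :=
    isBoundedUnder_of_eventually_ge
      (Eventually.of_forall fun t => by have := sum_nonneg fun τ (_ : τ ∈ range t) => hℓ τ; positivity)
      |>.isCoboundedUnder_le
  exact hlim.limsup_eq ▸ limsup_le_limsup hbound hcobdd hlim.isBoundedUnder_le

theorem ite_drift_le {ε B K C : ℝ} (hε : 0 ≤ ε) (hB : 0 ≤ B) (hK : 0 ≤ K) (hC : 0 ≤ C) (x : ℝ) :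
    (if B < x then -ε * x + K else C) ≤ -ε * x + (K + C + ε * B) := by
  split_ifs with h
  · nlinarith
  · nlinarith [not_lt.mp h]

section Integral

variable {Ω : Type*} [MeasurableSpace Ω] {μ : Measure Ω} {f : Ω → ℝ} {ε B K C : ℝ}

theorem integrable_ite_drift [IsFiniteMeasure μ] (hf : Measurable f) (hfi : Integrable f μ) :
    Integrable (fun ω => if B < f ω then -ε * f ω + K else C) μ := by
  refine (hfi.norm.const_mul |ε|).add (integrable_const (|K| + |C|)) |>.mono'
    (Measurable.ite (measurableSet_lt measurable_const hf)
      ((hf.const_mul (-ε)).add_const K) measurable_const).aestronglyMeasurable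
    (Eventually.of_forall fun ω => ?_)
  simp only [Real.norm_eq_abs, Pi.add_apply]
  split_ifs
  · calc |-ε * f ω + K| ≤ |ε| * |f ω| + |K| := by
          simpa [abs_mul] using abs_add_le (-ε * f ω) K
      _ ≤ _ := by linarith [abs_nonneg C]
  · linarith [abs_nonneg K, mul_nonneg (abs_nonneg ε) (abs_nonneg (f ω))]

theorem integral_ite_drift_le [IsProbabilityMeasure μ] (hf : Measurable f) (hfi : Integrable f μ)
    (hε : 0 ≤ ε) (hB : 0 ≤ B) (hK : 0 ≤ K) (hC : 0 ≤ C) :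
    ∫ ω, (if B < f ω then -ε * f ω + K else C) ∂μ ≤ -ε * ∫ ω, f ω ∂μ + (K + C + ε * B) := by
  calc ∫ ω, (if B < f ω then -ε * f ω + K else C) ∂μ
      ≤ ∫ ω, (-ε * f ω + (K + C + ε * B)) ∂μ :=
        integral_mono (integrable_ite_drift hf hfi) ((hfi.const_mul (-ε)).add (integrable_const _))
          fun ω => ite_drift_le hε hB hK hC (f ω)
    _ = -ε * ∫ ω, f ω ∂μ + (K + C + ε * B) := by
        rw [integral_add (hfi.const_mul (-ε)) (integrable_const _), integral_const_mul]
        simp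

end Integral

theorem stmt8_general {Ω : Type*} [MeasurableSpace Ω] (μ : Measure Ω) [IsProbabilityMeasure μ]
    (L V : ℕ → Ω → ℝ)
    (hLnn : ∀ t ω, 0 ≤ L t ω) (hVnn : ∀ t ω, 0 ≤ V t ω)
    (hLmeas : ∀ t, Measurable (L t))
    (hLint : ∀ t, Integrable (L t) μ) (hVint : ∀ t, Integrable (V t) μ)
    (ε B K C : ℝ) (hε : 0 < ε) (hB : 0 ≤ B) (hK : 0 ≤ K) (hC : 0 ≤ C)
    (hdrift : ∀ t, ∫ ω, (V (t + 1) ω - V t ω) ∂μ ≤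
        ∫ ω, (if B < L t ω then -ε * L t ω + K else C) ∂μ) :
    Filter.limsup
        (fun t : ℕ => (1 / (t : ℝ)) * ∑ τ ∈ Finset.range t, ∫ ω, L τ ω ∂μ)
        Filter.atTop
      ≤ (K + C + ε * B) / ε := by
  refine limsup_average_le_of_drift (v := fun t => ∫ ω, V t ω ∂μ) hε
    (fun t => integral_nonneg (hLnn t)) (fun t => integral_nonneg (hVnn t)) fun t => ?_
  rw [← integral_sub (hVint (t + 1)) (hVint t)]
  exact (hdrift t).trans (integral_ite_drift_le (hLmeas t) (hLint t) hε.le hB hK hC)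

/-- Foster–Lyapunov strong stability: if the expected Lyapunov drift is at most
`−ε·‖L(t)‖ + K` whenever `‖L(t)‖ > B` and at most `C` otherwise, then the
time-averaged expected total queue length satisfies
`limsup (1/t)·Σ_{τ<t} E[‖L(τ)‖] ≤ (K + C + εB)/ε`. -/
theorem stmt8 {Ω : Type*} [MeasurableSpace Ω] (μ : Measure Ω) [IsProbabilityMeasure μ]
    (L V : ℕ → Ω → ℝ)
    (hLnn : ∀ t ω, 0 ≤ L t ω) (hVnn : ∀ t ω, 0 ≤ V t ω)
    (hLmeas : ∀ t, Measurable (L t)) (hVmeas : ∀ t, Measurable (V t))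
    (hLint : ∀ t, Integrable (L t) μ) (hVint : ∀ t, Integrable (V t) μ)
    (ε B K C : ℝ) (hε : 0 < ε) (hB : 0 ≤ B) (hK : 0 ≤ K) (hC : 0 ≤ C)
    (hdrift : ∀ t, ∫ ω, (V (t + 1) ω - V t ω) ∂μ ≤
        ∫ ω, (if B < L t ω then -ε * L t ω + K else C) ∂μ) :
    Filter.limsup
        (fun t : ℕ => (1 / (t : ℝ)) * ∑ τ ∈ Finset.range t, ∫ ω, L τ ω ∂μ)
        Filter.atTop
      ≤ (K + C + ε * B) / ε :=
  stmt8_general μ L V hLnn hVnn hLmeas hLint hVint ε B K C hε hB hK hC hdrift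
end

section
/- (Lemma 2 key step) Suppose at a reconfiguration time τ the weight gap satisfies W*(τ) − ⟨L(τ), S(τ)⟩ < h(W*(t_k)) where h(x) = g(x − NT) − N(A_max+1)T and t_k ≤ τ ≤ t_k + T. Then for every τ' ∈ [τ, t_k + T], the gap satisfies W*(τ') − ⟨L(τ'), S(τ)⟩ ≤ g(W*(τ')), so the g-adaptive policy does not reconfigure within [τ, t_k + T]. -/
/-!
Over one slot every queue gains at most `A_max` and loses at most `1`; iterating this entrywise,
over `m ≤ T` slots every schedule weight, and hence `W*`, rises by at most `N A_max m` and falls by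
at most `N m`. So the gap of the fixed schedule `S(τ)` rises by at most `N (A_max + 1) T` between
`τ` and `τ'`, which keeps it below `g(W*(t_k) − N T)`, while `W*(τ') ≥ W*(t_k) − N T` and the
monotonicity of `g` turn this into the bound `g(W*(τ'))`.
-/

section Weights

variable {N : ℕ} {L L' : Matrix (Fin N) (Fin N) ℝ}

theorem schedWeight_le_maxWeight (L : Matrix (Fin N) (Fin N) ℝ) (σ : Equiv.Perm (Fin N)) :
    schedWeight L σ ≤ maxWeight L :=
  Finset.le_sup' (fun σ => schedWeight L σ) (Finset.mem_univ σ)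

theorem schedWeight_le_of_le_add {c : ℝ} (h : ∀ i j, L' i j ≤ L i j + c)
    (σ : Equiv.Perm (Fin N)) : schedWeight L' σ ≤ schedWeight L σ + N * c :=
  calc schedWeight L' σ ≤ ∑ i, (L i (σ i) + c) := Finset.sum_le_sum fun i _ => h i (σ i)
    _ = schedWeight L σ + N * c := by
      simp [schedWeight, Finset.sum_add_distrib]

theorem maxWeight_le_of_le_add {c : ℝ} (h : ∀ i j, L' i j ≤ L i j + c) :
    maxWeight L' ≤ maxWeight L + N * c :=
  Finset.sup'_le _ _ fun σ _ =>
    (schedWeight_le_of_le_add h σ).trans (by gcongr; exact schedWeight_le_maxWeight L σ)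

theorem maxWeight_sub_schedWeight_le {c d : ℝ} (hc : ∀ i j, L' i j ≤ L i j + c)
    (hd : ∀ i j, L i j ≤ L' i j + d) (σ : Equiv.Perm (Fin N)) :
    maxWeight L' - schedWeight L' σ ≤ maxWeight L - schedWeight L σ + N * (c + d) := by
  have hmax := maxWeight_le_of_le_add hc
  have hsched := schedWeight_le_of_le_add hd σ
  linarith

end Weights

theorem le_add_mul_of_forall_succ_le {x : ℕ → ℝ} {a : ℝ} (h : ∀ t, x (t + 1) ≤ x t + a)
    {s t : ℕ} (hst : s ≤ t) : x t ≤ x s + ((t : ℝ) - s) * a := by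
  have hanti : Antitone fun t : ℕ => x t - t * a :=
    antitone_nat_of_succ_le fun t => by push_cast; linarith [h t]
  linarith [hanti hst]

section Queues

variable {N : ℕ} {A_max : ℝ} {L A D : ℕ → Matrix (Fin N) (Fin N) ℝ}

theorem queue_le_add_arrivals (hevol : ∀ t, L (t + 1) = L t - D t + A t)
    (hA : ∀ t i j, 0 ≤ A t i j ∧ A t i j ≤ A_max) (hD : ∀ t i j, D t i j = 0 ∨ D t i j = 1)
    {s t : ℕ} (hst : s ≤ t) (i j : Fin N) : L t i j ≤ L s i j + ((t : ℝ) - s) * A_max := by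
  refine le_add_mul_of_forall_succ_le (x := fun t => L t i j) (fun t => ?_) hst
  have hDnonneg : 0 ≤ D t i j := by rcases hD t i j with h | h <;> simp [h]
  simp only [hevol t, Matrix.add_apply, Matrix.sub_apply]
  linarith [(hA t i j).2]

theorem queue_le_add_departures (hevol : ∀ t, L (t + 1) = L t - D t + A t)
    (hA : ∀ t i j, 0 ≤ A t i j ∧ A t i j ≤ A_max) (hD : ∀ t i j, D t i j = 0 ∨ D t i j = 1)
    {s t : ℕ} (hst : s ≤ t) (i j : Fin N) : L s i j ≤ L t i j + ((t : ℝ) - s) := by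
  have hneg := le_add_mul_of_forall_succ_le (x := fun t => -L t i j) (a := 1) (fun t => ?_) hst
  · linarith
  have hDle : D t i j ≤ 1 := by rcases hD t i j with h | h <;> simp [h]
  simp only [hevol t, Matrix.add_apply, Matrix.sub_apply]
  linarith [(hA t i j).1]

end Queues

theorem stmt11_general (N : ℕ) (A_max : ℝ) (hAmax : 0 ≤ A_max)
    (L A D : ℕ → Matrix (Fin N) (Fin N) ℝ)
    (hevol : ∀ t, L (t + 1) = L t - D t + A t)
    (hA : ∀ t i j, 0 ≤ A t i j ∧ A t i j ≤ A_max)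
    (hD : ∀ t i j, D t i j = 0 ∨ D t i j = 1)
    (g : ℝ → ℝ) (hg_mono : StrictMono g)
    (T : ℕ) (tk τ : ℕ) (htk : tk ≤ τ)
    (Sτ : Equiv.Perm (Fin N))
    (hgap : maxWeight (L τ) - schedWeight (L τ) Sτ
        < g (maxWeight (L tk) - (N : ℝ) * T) - (N : ℝ) * (A_max + 1) * T) :
    ∀ τ' : ℕ, τ ≤ τ' → τ' ≤ tk + T →
      maxWeight (L τ') - schedWeight (L τ') Sτ ≤ g (maxWeight (L τ')) := by
  intro τ' hττ' hτ'T
  have hτ'τ : (τ' : ℝ) - τ ≤ T := by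
    rw [sub_le_iff_le_add]; exact_mod_cast (by omega : τ' ≤ T + τ)
  have hτ'tk : (τ' : ℝ) - tk ≤ T := by
    rw [sub_le_iff_le_add]; exact_mod_cast (by omega : τ' ≤ T + tk)
  have hgrowth := maxWeight_sub_schedWeight_le (queue_le_add_arrivals hevol hA hD hττ')
    (queue_le_add_departures hevol hA hD hττ') Sτ
  have hdrop := maxWeight_le_of_le_add (queue_le_add_departures hevol hA hD (htk.trans hττ'))
  have hN : (0 : ℝ) ≤ N := N.cast_nonneg
  have hslots : (N : ℝ) * (((τ' : ℝ) - τ) * (A_max + 1)) ≤ N * (T * (A_max + 1)) := by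
    gcongr
  calc maxWeight (L τ') - schedWeight (L τ') Sτ
      ≤ maxWeight (L τ) - schedWeight (L τ) Sτ + N * (A_max + 1) * T := by linarith
    _ ≤ g (maxWeight (L tk) - N * T) := by linarith
    _ ≤ g (maxWeight (L τ')) :=
      hg_mono.monotone (by linarith [mul_le_mul_of_nonneg_left hτ'tk hN])

/-- Lemma 2 key step: if at a reconfiguration time `τ ∈ [t_k, t_k + T]` the weight gap
of the newly installed schedule `S(τ)` satisfies
`W*(τ) − ⟨L(τ), S(τ)⟩ < h(W*(t_k))` with `h(x) = g(x − NT) − N(A_max+1)T`, then for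
every `τ' ∈ [τ, t_k + T]` the gap satisfies `W*(τ') − ⟨L(τ'), S(τ)⟩ ≤ g(W*(τ'))`,
so the `g`-adaptive policy does not reconfigure within `[τ, t_k + T]`. -/
theorem stmt11 (N : ℕ) (A_max : ℝ) (hAmax : 0 ≤ A_max)
    (L A D : ℕ → Matrix (Fin N) (Fin N) ℝ)
    (hevol : ∀ t, L (t + 1) = L t - D t + A t)
    (hA : ∀ t i j, 0 ≤ A t i j ∧ A t i j ≤ A_max)
    (hD : ∀ t i j, D t i j = 0 ∨ D t i j = 1)
    (g : ℝ → ℝ) (hg_mono : StrictMono g)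
    (hg_sub : Filter.Tendsto (fun x => g x / x) Filter.atTop (nhds 0))
    (T : ℕ) (tk τ : ℕ) (htk : tk ≤ τ) (hτ : τ ≤ tk + T)
    (Sτ : Equiv.Perm (Fin N))
    (hgap : maxWeight (L τ) - schedWeight (L τ) Sτ
        < g (maxWeight (L tk) - (N : ℝ) * T) - (N : ℝ) * (A_max + 1) * T) :
    ∀ τ' : ℕ, τ ≤ τ' → τ' ≤ tk + T →
      maxWeight (L τ') - schedWeight (L τ') Sτ ≤ g (maxWeight (L τ')) :=
  stmt11_general N A_max hAmax L A D hevol hA hD g hg_mono T tk τ htk Sτ hgap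
end

section
/- (MaxWeight-α drift condition) Let f(x) = x^α for α > 0 and g be a sublinear increasing function with lim_{x→∞} x^{α−1}/g(x^α) = 0. Then for the Lyapunov function V(L) = Σ_{i,j} L_{ij}^{α+1}/(α+1), the per-slot drift along direction Δ with |Δ_{ij}| ≤ A_max satisfies V(L+Δ) − V(L) ≤ ⟨f(L), Δ⟩ + C·(1 + Σ_{i,j} L_{ij}^{max(α−1,0)}) for a constant C depending only on N, α, A_max, where f(L) denotes entrywise application of f. -/
/-!
Entrywise, convexity of `F(x) = x^(α+1)/(α+1)` gives `F(x+δ) - F(x) ≤ (x+δ)^α δ`, and the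
difference from the linear term `x^α δ` is the cross term `((x+δ)^α - x^α) δ`. For `α ≤ 1` it is
at most `|δ|^(α+1)`, by subadditivity of `t ↦ t^α`; for `α ≥ 1` the tangent-line inequality bounds
it by `α (x + A_max)^(α-1) δ²`, which grows like `x^(α-1)`. Summing over the `N²` entries gives the
claim.
-/

open Real

theorem rpow_sub_rpow_le_mul_sub {p a b : ℝ} (hp : 1 ≤ p) (ha : 0 ≤ a) (hb : 0 ≤ b) :
    b ^ p - a ^ p ≤ p * b ^ (p - 1) * (b - a) := by
  have hconv := convexOn_rpow hp
  have hderiv := hasDerivAt_rpow_const (x := b) (Or.inr hp)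
  rcases lt_trichotomy a b with hab | rfl | hab
  · have := hconv.slope_le_of_hasDerivAt ha hb hab hderiv
    rwa [slope_def_field, div_le_iff₀ (sub_pos.2 hab)] at this
  · simp
  · have := hconv.le_slope_of_hasDerivAt hb ha hab hderiv
    rw [slope_def_field, le_div_iff₀ (sub_pos.2 hab)] at this
    linarith

theorem rpow_sub_rpow_mul_sub_le_of_one_le {p a b : ℝ} (hp : 1 ≤ p) (ha : 0 ≤ a) (hb : 0 ≤ b) :
    (b ^ p - a ^ p) * (b - a) ≤ p * max a b ^ (p - 1) * (b - a) ^ 2 := by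
  wlog hab : a ≤ b generalizing a b
  · rw [max_comm]
    convert this hb ha (le_of_not_ge hab) using 1 <;> ring
  rw [max_eq_right hab]
  calc (b ^ p - a ^ p) * (b - a) ≤ p * b ^ (p - 1) * (b - a) * (b - a) :=
        mul_le_mul_of_nonneg_right (rpow_sub_rpow_le_mul_sub hp ha hb) (sub_nonneg.2 hab)
    _ = p * b ^ (p - 1) * (b - a) ^ 2 := by ring

theorem rpow_sub_rpow_mul_sub_le_of_le_one {p a b : ℝ} (hp₀ : 0 ≤ p) (hp₁ : p ≤ 1)
    (ha : 0 ≤ a) (hb : 0 ≤ b) :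
    (b ^ p - a ^ p) * (b - a) ≤ |b - a| ^ (p + 1) := by
  wlog hab : a ≤ b generalizing a b
  · rw [abs_sub_comm]
    convert this hb ha (le_of_not_ge hab) using 1; ring
  have hsub : b ^ p - a ^ p ≤ (b - a) ^ p := by
    have := rpow_add_le_add_rpow ha (sub_nonneg.2 hab) hp₀ hp₁
    rw [add_sub_cancel] at this
    linarith
  rw [abs_of_nonneg (sub_nonneg.2 hab), rpow_add_one' (sub_nonneg.2 hab) (by linarith)]
  exact mul_le_mul_of_nonneg_right hsub (sub_nonneg.2 hab)

theorem add_rpow_le_one_add_rpow_mul {q x A : ℝ} (hq : 0 ≤ q) (hx : 0 ≤ x) (hA : 0 ≤ A) :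
    (x + A) ^ q ≤ (1 + A) ^ q * (1 + x ^ q) := by
  have hsplit : x + A ≤ (1 + A) * max x 1 := by
    rcases le_total x 1 with h | h
    · rw [max_eq_right h]; linarith
    · rw [max_eq_left h]; nlinarith
  calc (x + A) ^ q ≤ ((1 + A) * max x 1) ^ q := rpow_le_rpow (by positivity) hsplit hq
    _ = (1 + A) ^ q * max (x ^ q) 1 := by
      rw [mul_rpow (by positivity) (by positivity), ← one_rpow q,
        ← rpow_max hx zero_le_one hq, one_rpow]
    _ ≤ (1 + A) ^ q * (1 + x ^ q) := by
      gcongr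
      exact max_le (by linarith) (by linarith [rpow_nonneg hx q])
theorem exists_rpow_sub_rpow_mul_sub_le {α A : ℝ} (hα : 0 < α) (hA : 0 ≤ A) :
    ∃ C, 0 ≤ C ∧ ∀ a b : ℝ, 0 ≤ a → 0 ≤ b → |b - a| ≤ A →
      (b ^ α - a ^ α) * (b - a) ≤ C * (1 + a ^ max (α - 1) 0) := by
  rcases le_total α 1 with hα₁ | hα₁
  · refine ⟨A ^ (α + 1), by positivity, fun a b ha hb hba => ?_⟩
    rw [max_eq_right (by linarith), rpow_zero]
    calc (b ^ α - a ^ α) * (b - a) ≤ |b - a| ^ (α + 1) :=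
          rpow_sub_rpow_mul_sub_le_of_le_one hα.le hα₁ ha hb
      _ ≤ A ^ (α + 1) := rpow_le_rpow (abs_nonneg _) hba (by linarith)
      _ ≤ A ^ (α + 1) * (1 + 1) := by linarith [rpow_nonneg hA (α + 1)]
  · refine ⟨α * (1 + A) ^ (α - 1) * A ^ 2, by positivity, fun a b ha hb hba => ?_⟩
    rw [max_eq_left (by linarith)]
    have hmax : max a b ≤ a + A := max_le (by linarith) (by linarith [le_of_abs_le hba])
    have hsq : (b - a) ^ 2 ≤ A ^ 2 := by
      rw [← sq_abs]; exact pow_le_pow_left₀ (abs_nonneg _) hba 2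
    calc (b ^ α - a ^ α) * (b - a) ≤ α * max a b ^ (α - 1) * (b - a) ^ 2 :=
          rpow_sub_rpow_mul_sub_le_of_one_le hα₁ ha hb
      _ ≤ α * (a + A) ^ (α - 1) * A ^ 2 := by
          gcongr
      _ ≤ α * ((1 + A) ^ (α - 1) * (1 + a ^ (α - 1))) * A ^ 2 := by
          gcongr
          exact add_rpow_le_one_add_rpow_mul (by linarith) ha hA
      _ = α * (1 + A) ^ (α - 1) * A ^ 2 * (1 + a ^ (α - 1)) := by ring

theorem exists_rpow_succ_div_sub_le {α A : ℝ} (hα : 0 < α) (hA : 0 ≤ A) :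
    ∃ C, 0 ≤ C ∧ ∀ x δ : ℝ, 0 ≤ x → 0 ≤ x + δ → |δ| ≤ A →
      (x + δ) ^ (α + 1) / (α + 1) - x ^ (α + 1) / (α + 1)
        ≤ x ^ α * δ + C * (1 + x ^ max (α - 1) 0) := by
  obtain ⟨C, hC, hcross⟩ := exists_rpow_sub_rpow_mul_sub_le hα hA
  refine ⟨C, hC, fun x δ hx hxδ hδ => ?_⟩
  have htangent := rpow_sub_rpow_le_mul_sub (p := α + 1) (by linarith) hx hxδ
  have hcross' := hcross x (x + δ) hx hxδ (by rwa [add_sub_cancel_left])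
  rw [add_sub_cancel_right, add_sub_cancel_left] at htangent
  rw [add_sub_cancel_left] at hcross'
  rw [div_sub_div_same, div_le_iff₀ (by linarith)]
  nlinarith

theorem Fintype.sum_le_sum_add_mul_one_add_sum {ι : Type*} [Fintype ι] {f g h : ι → ℝ} {C : ℝ}
    (hC : 0 ≤ C) (hh : ∀ i, 0 ≤ h i) (hfg : ∀ i, f i ≤ g i + C * (1 + h i)) :
    ∑ i, f i ≤ ∑ i, g i + C * (Fintype.card ι + 1) * (1 + ∑ i, h i) := by
  have hsum : 0 ≤ ∑ i, h i := Finset.sum_nonneg fun i _ => hh i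
  calc ∑ i, f i ≤ ∑ i, (g i + C * (1 + h i)) := Finset.sum_le_sum fun i _ => hfg i
    _ = ∑ i, g i + C * (Fintype.card ι + ∑ i, h i) := by
      simp only [Finset.sum_add_distrib, ← Finset.mul_sum, Finset.sum_const, Finset.card_univ,
        nsmul_eq_mul, mul_one]
    _ ≤ ∑ i, g i + C * (Fintype.card ι + 1) * (1 + ∑ i, h i) := by
      have : (Fintype.card ι : ℝ) + ∑ i, h i ≤ (Fintype.card ι + 1) * (1 + ∑ i, h i) := by
        nlinarith [mul_nonneg (Nat.cast_nonneg (Fintype.card ι) : (0:ℝ) ≤ _) hsum]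
      nlinarith [mul_le_mul_of_nonneg_left this hC]

theorem stmt19_general (N : ℕ) (α A_max : ℝ) (hα : 0 < α) (hAmax : 0 ≤ A_max) :
    ∃ C : ℝ, ∀ (L Δ : Matrix (Fin N) (Fin N) ℝ),
      (∀ i j, 0 ≤ L i j) → (∀ i j, 0 ≤ L i j + Δ i j) → (∀ i j, |Δ i j| ≤ A_max) →
      (∑ i, ∑ j, ((L i j + Δ i j) ^ (α + 1) / (α + 1))) -
          (∑ i, ∑ j, ((L i j) ^ (α + 1) / (α + 1)))
        ≤ (∑ i, ∑ j, (L i j) ^ α * Δ i j) +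
            C * (1 + ∑ i, ∑ j, (L i j) ^ (max (α - 1) 0)) := by
  obtain ⟨C, hC, hentry⟩ := exists_rpow_succ_div_sub_le hα hAmax
  refine ⟨C * (Fintype.card (Fin N × Fin N) + 1), fun L Δ hL hLΔ hΔ => ?_⟩
  simp only [← Fintype.sum_prod_type', ← Finset.sum_sub_distrib]
  exact Fintype.sum_le_sum_add_mul_one_add_sum hC (fun ij => rpow_nonneg (hL ij.1 ij.2) _)
    fun ij => hentry _ _ (hL ij.1 ij.2) (hLΔ ij.1 ij.2) (hΔ ij.1 ij.2)

/-- MaxWeight-α drift condition: with `f(x) = x^α` (`α > 0`) and a sublinear increasing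
`g` with `x^(α−1)/g(x^α) → 0`, the Lyapunov function `V(L) = Σ L_{ij}^{α+1}/(α+1)`
satisfies, for any direction `Δ` with `|Δ_{ij}| ≤ A_max` and `L + Δ ≥ 0`,
`V(L+Δ) − V(L) ≤ ⟨f(L), Δ⟩ + C·(1 + Σ L_{ij}^{max(α−1,0)})` for a constant `C`
depending only on `N, α, A_max`. -/
theorem stmt19 (N : ℕ) (α A_max : ℝ) (hα : 0 < α) (hAmax : 0 ≤ A_max)
    (g : ℝ → ℝ) (hg_mono : StrictMono g)
    (hg_sub : Filter.Tendsto (fun x => g x / x) Filter.atTop (nhds 0))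
    (hg_lim : Filter.Tendsto (fun x : ℝ => x ^ (α - 1) / g (x ^ α))
      Filter.atTop (nhds 0)) :
    ∃ C : ℝ, ∀ (L Δ : Matrix (Fin N) (Fin N) ℝ),
      (∀ i j, 0 ≤ L i j) → (∀ i j, 0 ≤ L i j + Δ i j) → (∀ i j, |Δ i j| ≤ A_max) →
      (∑ i, ∑ j, ((L i j + Δ i j) ^ (α + 1) / (α + 1))) -
          (∑ i, ∑ j, ((L i j) ^ (α + 1) / (α + 1)))
        ≤ (∑ i, ∑ j, (L i j) ^ α * Δ i j) +
            C * (1 + ∑ i, ∑ j, (L i j) ^ (max (α - 1) 0)) :=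
  stmt19_general N α A_max hα hAmax
end
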